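/- arXiv:2312.05635 — 8 statements merged into one kernel-verified Lean document; each statement's English description precedes it below -/
import Mathlib

section
/- For every r > 3^{-1/k} there exists a function f in the unit ball of H^∞(𝔻) and a Schwarz-type function ω with |ω(z)| ≤ |z|^k such that ∑_{n=0}^∞ |a_n||ω(z)|^n > 1 for some |z| = r. Concretely, taking ω(z)=z^k and f_a(z)=(a−z)/(1−az) with a∈(0,1) close to 1, one has a + (1−a²)∑_{n=1}^∞ a^{n−1} r^{kn} > 1 whenever r^k > 1/(2+a), i.e. for a sufficiently close to 1 the inequality fails for any fixed r > 3^{-1/k}. -/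
open Complex

/-- Sharpness of the radius `3 ^ (-1/k)`: for every `r` with `3 ^ (-1/k) < r < 1`, the test
functions `f_a(z) = (a - z)/(1 - a z)` together with `ω(z) = z ^ k` violate the Bohr inequality,
i.e. there is `a ∈ (0,1)` with `a + (1 - a²) ∑_{n≥1} a^{n-1} r^{k n} > 1`. -/
theorem stmt_1 (k : ℕ) (hk : 1 ≤ k) (r : ℝ)
    (hr1 : (3 : ℝ) ^ (-(1 : ℝ) / (k : ℝ)) < r) (hr2 : r < 1) :
    ∃ a : ℝ, a ∈ Set.Ioo (0 : ℝ) 1 ∧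
      1 < a + (1 - a ^ 2) * ∑' n : ℕ, a ^ n * r ^ (k * (n + 1)) := by
  have hk0 : (0:ℝ) < k := by exact_mod_cast hk
  have hr0 : (0:ℝ) < r :=
    lt_trans (Real.rpow_pos_of_pos (by norm_num) _) hr1
  set t : ℝ := r ^ k with ht
  have ht0 : 0 < t := pow_pos hr0 k
  have ht2 : t < 1 := pow_lt_one₀ hr0.le hr2 (by omega)
  have ht1 : 1/3 < t := by
    have h1 : ((3:ℝ) ^ (-(1:ℝ)/(k:ℝ))) ^ k < r ^ k := by
      apply pow_lt_pow_left₀ hr1 (Real.rpow_nonneg (by norm_num) _) (by omega)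
    have h2 : ((3:ℝ) ^ (-(1:ℝ)/(k:ℝ))) ^ k = 1/3 := by
      rw [← Real.rpow_natCast ((3:ℝ) ^ (-(1:ℝ)/(k:ℝ))) k, ← Real.rpow_mul (by norm_num)]
      rw [div_mul_cancel₀ _ (ne_of_gt hk0)]
      norm_num [Real.rpow_neg_one]
    rw [← h2]; exact h1
  set c : ℝ := (1/t - 1)/2 with hc
  have hc0 : 0 < c := by
    have : 1 < 1/t := by rw [lt_div_iff₀ ht0]; linarith
    simp only [hc]; linarith
  have hc1 : c < 1 := by
    have : 1/t < 3 := by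
      rw [div_lt_iff₀ ht0]; linarith
    simp only [hc]; linarith
  refine ⟨(c+1)/2, ⟨by linarith, by linarith⟩, ?_⟩
  set a : ℝ := (c+1)/2 with ha
  have ha0 : 0 < a := by simp only [ha]; linarith
  have ha1 : a < 1 := by simp only [ha]; linarith
  have hat : a * t < 1 := by nlinarith
  have hsum : ∑' n : ℕ, a ^ n * r ^ (k * (n + 1)) = t / (1 - a * t) := by
    have heq : ∀ n : ℕ, a ^ n * r ^ (k * (n + 1)) = t * (a*t) ^ n := by
      intro n
      rw [pow_mul, ht, mul_pow]
      ring_nf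
    rw [tsum_congr heq, tsum_mul_left, tsum_geometric_of_lt_one (by positivity) hat]
    rw [div_eq_mul_inv]
  rw [hsum]
  have h1at : 0 < 1 - a * t := by linarith
  have htt : t * (1/t) = 1 := mul_one_div_cancel ht0.ne'
  have hac : c < a := by simp only [ha]; linarith
  have key : 1 - a < (1 - a^2) * (t / (1 - a * t)) := by
    rw [mul_div_assoc', lt_div_iff₀ h1at]
    nlinarith
  linarith
end

section
/- Let f(z)=∑_{n=0}^∞ a_n z^n be analytic on the unit disk with |f| ≤ 1, let a = |a_0|, and let ω_m, ω_k be analytic self-maps of the disk with |ω_m(z)| ≤ |z|^m and |ω_k(z)| ≤ |z|^k. Then for p ∈ (0,2] and N ≥ 1, |f(ω_m(z))|^p + ∑_{n=N}^∞ |a_n||ω_k(z)|^n ≤ 1 for all |z| = r ≤ R, where R is the unique root in (0,1) of 2r^{kN}(1+r^m) − p(1−r^m)(1−r^k) = 0. -/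
/-!
Write `A = ‖a 0‖`. By Schwarz–Pick, `‖f w‖ ≤ (A + ‖w‖) / (1 + A‖w‖)`; the self-maps of the
closed disc that are not self-maps of the open one are unimodular constants, for which all the
estimates are trivial. Averaging `f` over the rotations `z ↦ ζ ^ j * z` by the `n`-th roots of
unity gives `g (z ^ n)` with `g w = ∑ a (n t) w ^ t`, a bounded function with `g 0 = a 0` and
`g' 0 = a n`, so the Schwarz–Pick bound on `‖g' 0‖` is Wiener's inequality `‖a n‖ ≤ 1 - A ^ 2`
for `n ≥ 1`. With `x = R ^ m`, `y = R ^ k` the left side is then at most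
`t ^ p + (1 - A ^ 2) y ^ N / (1 - y)` with `t = (A + x) / (1 + A x)`, and Bernoulli's inequality
`t ^ p ≤ 1 - (p / 2)(1 - t ^ 2)` together with `1 - t ^ 2 ≥ (1 - A ^ 2)(1 - x) / (1 + x)` reduces
the claim to the equation defining `R`.
-/

open Complex Metric Set ComplexConjugate FormalMultilinearSeries

noncomputable def diskAut (a w : ℂ) : ℂ := (a - w) / (1 - conj a * w)

section DiskAut

variable {a v w : ℂ}

theorem sq_norm_one_sub_conj_mul (a w : ℂ) :
    ‖1 - conj a * w‖ ^ 2 = ‖a - w‖ ^ 2 + (1 - ‖a‖ ^ 2) * (1 - ‖w‖ ^ 2) := by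
  simp only [Complex.sq_norm, normSq_apply, sub_re, sub_im, mul_re, mul_im, conj_re, conj_im,
    one_re, one_im]
  ring

theorem one_sub_conj_mul_ne_zero (ha : ‖a‖ < 1) (hw : ‖w‖ ≤ 1) : 1 - conj a * w ≠ 0 := by
  intro h
  have : ‖a‖ * ‖w‖ = 1 := by
    rw [← norm_conj a, ← norm_mul, ← sub_eq_zero.mp h, norm_one]
  nlinarith [norm_nonneg a, norm_nonneg w]

theorem norm_diskAut_lt_one (ha : ‖a‖ < 1) (hw : ‖w‖ < 1) : ‖diskAut a w‖ < 1 := by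
  have hden := one_sub_conj_mul_ne_zero ha hw.le
  rw [diskAut, norm_div, div_lt_one (norm_pos_iff.mpr hden),
    ← sq_lt_sq₀ (norm_nonneg _) (norm_nonneg _), sq_norm_one_sub_conj_mul, lt_add_iff_pos_right]
  exact mul_pos (by nlinarith [norm_nonneg a]) (by nlinarith [norm_nonneg w])

theorem diskAut_diskAut (ha : ‖a‖ < 1) (hw : ‖w‖ ≤ 1) : diskAut a (diskAut a w) = w := by
  have hden := one_sub_conj_mul_ne_zero ha hw
  have hden' : 1 - conj a * diskAut a w = (1 - conj a * a) / (1 - conj a * w) := by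
    rw [diskAut]
    field_simp
    ring
  rw [diskAut, hden', div_div_eq_mul_div, diskAut, sub_mul, div_mul_cancel₀ _ hden,
    div_eq_iff (one_sub_conj_mul_ne_zero ha ha.le)]
  ring

theorem norm_diskAut_le (ha : ‖a‖ < 1) (hv : ‖v‖ ≤ 1) :
    ‖diskAut a v‖ ≤ (‖a‖ + ‖v‖) / (1 + ‖a‖ * ‖v‖) := by
  have hden := norm_pos_iff.mpr (one_sub_conj_mul_ne_zero ha hv)
  have hre : -(‖a‖ * ‖v‖) ≤ (a * conj v).re := by
    have := abs_re_le_norm (a * conj v)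
    rw [norm_mul, norm_conj] at this
    exact neg_le_of_abs_le this
  rw [diskAut, norm_div, div_le_div_iff₀ hden (by positivity),
    ← pow_le_pow_iff_left₀ (by positivity) (by positivity) two_ne_zero, mul_pow, mul_pow,
    sq_norm_one_sub_conj_mul, Complex.sq_norm (a - v), normSq_sub, ← Complex.sq_norm,
    ← Complex.sq_norm]
  have ha2 : 0 ≤ 1 - ‖a‖ ^ 2 := by nlinarith [norm_nonneg a]
  have hv2 : 0 ≤ 1 - ‖v‖ ^ 2 := by nlinarith [norm_nonneg v]
  nlinarith [mul_nonneg (mul_nonneg ha2 hv2) (neg_le_iff_add_nonneg.mp hre)]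

theorem hasDerivAt_diskAut_self (ha : ‖a‖ < 1) :
    HasDerivAt (diskAut a) (-((1 - ‖a‖ ^ 2 : ℝ) : ℂ)⁻¹) a := by
  have hden := one_sub_conj_mul_ne_zero ha ha.le
  have h : HasDerivAt (diskAut a) ((-1 * (1 - conj a * a) - (a - a) * -(conj a * 1)) /
      (1 - conj a * a) ^ 2) a :=
    ((hasDerivAt_id a).const_sub a).div (((hasDerivAt_id a).const_mul (conj a)).const_sub 1) hden
  convert h using 1
  rw [ofReal_sub, ofReal_one, Complex.sq_norm, normSq_eq_conj_mul_self]
  field_simp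
  ring

theorem add_div_one_add_mul_le_of_le {A s x : ℝ} (hA₀ : 0 ≤ A) (hA₁ : A ≤ 1) (hs : 0 ≤ s)
    (hsx : s ≤ x) : (A + s) / (1 + A * s) ≤ (A + x) / (1 + A * x) := by
  rw [div_le_div_iff₀ (by positivity) (by nlinarith)]
  nlinarith [mul_nonneg (sub_nonneg.2 hsx) (by nlinarith : (0:ℝ) ≤ 1 - A ^ 2)]

end DiskAut

section SchwarzPick

variable {F : ℂ → ℂ}

theorem differentiableOn_diskAut_comp (hd : DifferentiableOn ℂ F (ball 0 1))
    (hF : MapsTo F (ball 0 1) (ball 0 1)) :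
    DifferentiableOn ℂ (diskAut (F 0) ∘ F) (ball 0 1) := by
  have ha : ‖F 0‖ < 1 := mem_ball_zero_iff.mp (hF (mem_ball_self one_pos))
  exact ((differentiableOn_const _).sub hd).div
    ((differentiableOn_const 1).sub ((differentiableOn_const _).mul hd))
    fun _ hz ↦ one_sub_conj_mul_ne_zero ha (mem_ball_zero_iff.mp (hF hz)).le

theorem mapsTo_diskAut_comp (hF : MapsTo F (ball 0 1) (ball 0 1)) :
    MapsTo (diskAut (F 0) ∘ F) (ball 0 1) (closedBall 0 1) := fun _ hz ↦
  mem_closedBall_zero_iff.mpr (norm_diskAut_lt_one (mem_ball_zero_iff.mp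
    (hF (mem_ball_self one_pos))) (mem_ball_zero_iff.mp (hF hz))).le

theorem norm_apply_le_of_mapsTo_ball (hd : DifferentiableOn ℂ F (ball 0 1))
    (hF : MapsTo F (ball 0 1) (ball 0 1)) {w : ℂ} (hw : ‖w‖ < 1) :
    ‖F w‖ ≤ (‖F 0‖ + ‖w‖) / (1 + ‖F 0‖ * ‖w‖) := by
  have ha : ‖F 0‖ < 1 := mem_ball_zero_iff.mp (hF (mem_ball_self one_pos))
  have hFw : ‖F w‖ < 1 := mem_ball_zero_iff.mp (hF (mem_ball_zero_iff.mpr hw))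
  have hg := Complex.norm_le_norm_of_mapsTo_ball (differentiableOn_diskAut_comp hd hF)
    (mapsTo_diskAut_comp hF) (by simp [diskAut]) hw
  calc ‖F w‖ = ‖diskAut (F 0) (diskAut (F 0) (F w))‖ := by rw [diskAut_diskAut ha hFw.le]
    _ ≤ (‖F 0‖ + ‖diskAut (F 0) (F w)‖) / (1 + ‖F 0‖ * ‖diskAut (F 0) (F w)‖) :=
      norm_diskAut_le ha (norm_diskAut_lt_one ha hFw).le
    _ ≤ (‖F 0‖ + ‖w‖) / (1 + ‖F 0‖ * ‖w‖) :=
      add_div_one_add_mul_le_of_le (norm_nonneg _) ha.le (norm_nonneg _) hg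

theorem norm_deriv_zero_le_of_mapsTo_ball (hd : DifferentiableOn ℂ F (ball 0 1))
    (hF : MapsTo F (ball 0 1) (ball 0 1)) : ‖deriv F 0‖ ≤ 1 - ‖F 0‖ ^ 2 := by
  have ha : ‖F 0‖ < 1 := mem_ball_zero_iff.mp (hF (mem_ball_self one_pos))
  have hpos : 0 < 1 - ‖F 0‖ ^ 2 := by nlinarith [norm_nonneg (F 0)]
  have hFd : HasDerivAt F (deriv F 0) 0 :=
    (hd.differentiableAt (ball_mem_nhds 0 one_pos)).hasDerivAt
  have hg := Complex.norm_deriv_le_one_of_mapsTo_ball (differentiableOn_diskAut_comp hd hF)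
    (by simpa [diskAut] using mapsTo_diskAut_comp hF) one_pos
  rw [((hasDerivAt_diskAut_self ha).comp 0 hFd).deriv, norm_mul, norm_neg, norm_inv,
    norm_real, Real.norm_of_nonneg hpos.le, inv_mul_le_iff₀ hpos, mul_one] at hg
  exact hg

theorem mapsTo_ball_or_eqOn_const (hd : DifferentiableOn ℂ F (ball 0 1))
    (hF : MapsTo F (ball 0 1) (closedBall 0 1)) :
    MapsTo F (ball 0 1) (ball 0 1) ∨ ‖F 0‖ = 1 ∧ EqOn F (Function.const ℂ (F 0)) (ball 0 1) := by
  by_cases hlt : MapsTo F (ball 0 1) (ball 0 1)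
  · exact Or.inl hlt
  obtain ⟨z₀, hz₀, hFz₀⟩ := not_forall₂.mp hlt
  have hnorm : ‖F z₀‖ = 1 :=
    le_antisymm (mem_closedBall_zero_iff.mp (hF hz₀)) (by simpa using hFz₀)
  have hmax : IsMaxOn (norm ∘ F) (ball 0 1) z₀ := fun z hz ↦ by
    simpa [hnorm] using mem_closedBall_zero_iff.mp (hF hz)
  have hconst := Complex.eqOn_of_isPreconnected_of_isMaxOn_norm
    (convex_ball (0 : ℂ) 1).isPreconnected isOpen_ball hd hz₀ hmax
  have h0 : F 0 = F z₀ := hconst (mem_ball_self one_pos)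
  exact Or.inr ⟨h0 ▸ hnorm, h0 ▸ hconst⟩

theorem norm_apply_le_of_mapsTo_closedBall (hd : DifferentiableOn ℂ F (ball 0 1))
    (hF : MapsTo F (ball 0 1) (closedBall 0 1)) {w : ℂ} (hw : ‖w‖ < 1) :
    ‖F w‖ ≤ (‖F 0‖ + ‖w‖) / (1 + ‖F 0‖ * ‖w‖) := by
  rcases mapsTo_ball_or_eqOn_const hd hF with hball | ⟨hnorm, hconst⟩
  · exact norm_apply_le_of_mapsTo_ball hd hball hw
  · rw [hconst (mem_ball_zero_iff.mpr hw), Function.const_apply, hnorm, one_mul,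
      div_self (by positivity)]

theorem norm_deriv_zero_le_of_mapsTo_closedBall (hd : DifferentiableOn ℂ F (ball 0 1))
    (hF : MapsTo F (ball 0 1) (closedBall 0 1)) : ‖deriv F 0‖ ≤ 1 - ‖F 0‖ ^ 2 := by
  rcases mapsTo_ball_or_eqOn_const hd hF with hball | ⟨hnorm, hconst⟩
  · exact norm_deriv_zero_le_of_mapsTo_ball hd hball
  · rw [(Filter.eventuallyEq_of_mem (ball_mem_nhds 0 one_pos) hconst).deriv_eq]
    show ‖deriv (fun _ ↦ F 0) 0‖ ≤ _
    simp [hnorm]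

end SchwarzPick

theorem eball_one_eq_ball {X : Type*} [PseudoMetricSpace X] (x : X) : eball x 1 = ball x 1 := by
  simpa using Metric.eball_coe (x := x) (ε := 1)

theorem IsPrimitiveRoot.sum_range_pow_pow_eq_ite {R : Type*} [CommRing R] [IsDomain R] {ζ : R}
    {n : ℕ} (hζ : IsPrimitiveRoot ζ n) (l : ℕ) :
    ∑ j ∈ Finset.range n, (ζ ^ l) ^ j = if n ∣ l then (n : R) else 0 := by
  split_ifs with hl
  · simp [(hζ.pow_eq_one_iff_dvd l).mpr hl]
  · have hne : ζ ^ l - 1 ≠ 0 := sub_ne_zero.mpr fun h ↦ hl ((hζ.pow_eq_one_iff_dvd l).mp h)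
    have hpow : (ζ ^ l) ^ n = 1 := by rw [← pow_mul, mul_comm, pow_mul, hζ.pow_eq_one, one_pow]
    have h := geom_sum_mul (ζ ^ l) n
    rw [hpow, sub_self] at h
    exact (mul_eq_zero.mp h).resolve_right hne

section PowerSeries

variable {a : ℕ → ℂ} {f : ℂ → ℂ}

theorem hasFPowerSeriesOnBall_ofScalars_of_hasSum
    (hf : ∀ z : ℂ, ‖z‖ < 1 → HasSum (fun n ↦ a n * z ^ n) (f z)) :
    HasFPowerSeriesOnBall f (ofScalars ℂ a) 0 1 where
  r_le := by
    refine ENNReal.le_of_forall_nnreal_lt fun r hr ↦ le_radius_of_summable _ ?_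
    have hr1 : ‖((r : ℝ) : ℂ)‖ < 1 := by simpa using (show (r : ℝ) < 1 by exact_mod_cast hr)
    simpa [ofScalars_norm, norm_mul] using (hf _ hr1).summable.norm
  r_pos := one_pos
  hasSum {y} hy := by
    rw [eball_one_eq_ball] at hy
    simpa [ofScalars_apply_eq, mul_comm] using hf y (mem_ball_zero_iff.mp hy)

theorem differentiableOn_of_hasSum
    (hf : ∀ z : ℂ, ‖z‖ < 1 → HasSum (fun n ↦ a n * z ^ n) (f z)) :
    DifferentiableOn ℂ f (ball 0 1) :=
  eball_one_eq_ball (0 : ℂ) ▸ (hasFPowerSeriesOnBall_ofScalars_of_hasSum hf).differentiableOn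

theorem deriv_zero_eq_of_hasSum
    (hf : ∀ z : ℂ, ‖z‖ < 1 → HasSum (fun n ↦ a n * z ^ n) (f z)) :
    deriv f 0 = a 1 := by
  simpa [coeff_ofScalars] using
    (hasFPowerSeriesOnBall_ofScalars_of_hasSum hf).hasFPowerSeriesAt.deriv

theorem apply_zero_eq_of_hasSum
    (hf : ∀ z : ℂ, ‖z‖ < 1 → HasSum (fun n ↦ a n * z ^ n) (f z)) :
    f 0 = a 0 :=
  (hf 0 (by simp)).unique <| by
    simpa using hasSum_single (f := fun n ↦ a n * (0 : ℂ) ^ n) 0 fun n hn ↦ by simp [hn]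

theorem norm_coeff_one_le_of_hasSum
    (hf : ∀ z : ℂ, ‖z‖ < 1 → HasSum (fun n ↦ a n * z ^ n) (f z))
    (hfb : ∀ z : ℂ, ‖z‖ < 1 → ‖f z‖ ≤ 1) : ‖a 1‖ ≤ 1 - ‖a 0‖ ^ 2 := by
  have h := norm_deriv_zero_le_of_mapsTo_closedBall (differentiableOn_of_hasSum hf)
    fun z hz ↦ mem_closedBall_zero_iff.mpr (hfb z (mem_ball_zero_iff.mp hz))
  rwa [deriv_zero_eq_of_hasSum hf, apply_zero_eq_of_hasSum hf] at h

theorem hasSum_coeff_mul_mul_pow_of_hasSum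
    (hf : ∀ z : ℂ, ‖z‖ < 1 → HasSum (fun n ↦ a n * z ^ n) (f z))
    {n : ℕ} (hn : n ≠ 0) {ζ : ℂ} (hζ : IsPrimitiveRoot ζ n) {z : ℂ} (hz : ‖z‖ < 1) :
    HasSum (fun t ↦ a (n * t) * (z ^ n) ^ t) ((∑ j ∈ Finset.range n, f (ζ ^ j * z)) / n) := by
  have hrot : ∀ j, ‖ζ ^ j * z‖ < 1 := fun j ↦ by
    rwa [norm_mul, norm_pow, hζ.norm'_eq_one hn, one_pow, one_mul]
  have hsum : HasSum (fun l ↦ a l * z ^ l * if n ∣ l then (n : ℂ) else 0)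
      (∑ j ∈ Finset.range n, f (ζ ^ j * z)) := by
    convert hasSum_sum (s := Finset.range n) fun j _ ↦ hf _ (hrot j) using 2 with l
    rw [← hζ.sum_range_pow_pow_eq_ite, Finset.mul_sum]
    refine Finset.sum_congr rfl fun j _ ↦ ?_
    ring
  rw [← (mul_right_injective₀ hn).hasSum_iff fun l hl ↦ by
    rw [if_neg fun ⟨t, ht⟩ ↦ hl ⟨t, ht.symm⟩, mul_zero]] at hsum
  refine (hsum.div_const (n : ℂ)).congr_fun fun t ↦ ?_
  simp [pow_mul, hn]

theorem norm_coeff_le_one_sub_sq_of_hasSum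
    (hf : ∀ z : ℂ, ‖z‖ < 1 → HasSum (fun n ↦ a n * z ^ n) (f z))
    (hfb : ∀ z : ℂ, ‖z‖ < 1 → ‖f z‖ ≤ 1) {n : ℕ} (hn : n ≠ 0) :
    ‖a n‖ ≤ 1 - ‖a 0‖ ^ 2 := by
  obtain ⟨ζ, hζ⟩ : ∃ ζ : ℂ, IsPrimitiveRoot ζ n := ⟨_, isPrimitiveRoot_exp n hn⟩
  have hroot : ∀ w : ℂ, ‖w‖ < 1 → ∃ z : ℂ, ‖z‖ < 1 ∧ z ^ n = w := fun w hw ↦ by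
    obtain ⟨z, rfl⟩ := IsAlgClosed.exists_pow_nat_eq w (Nat.pos_of_ne_zero hn)
    exact ⟨z, by rwa [norm_pow, pow_lt_one_iff_of_nonneg (norm_nonneg z) hn] at hw, rfl⟩
  let G : ℂ → ℂ := fun w ↦ ∑' t, a (n * t) * w ^ t
  have hG : ∀ w : ℂ, ‖w‖ < 1 → HasSum (fun t ↦ a (n * t) * w ^ t) (G w) := fun w hw ↦ by
    obtain ⟨z, hz, rfl⟩ := hroot w hw
    exact (hasSum_coeff_mul_mul_pow_of_hasSum hf hn hζ hz).summable.hasSum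
  have hGb : ∀ w : ℂ, ‖w‖ < 1 → ‖G w‖ ≤ 1 := fun w hw ↦ by
    obtain ⟨z, hz, rfl⟩ := hroot w hw
    rw [show G (z ^ n) = _ from (hasSum_coeff_mul_mul_pow_of_hasSum hf hn hζ hz).tsum_eq,
      norm_div, norm_natCast, div_le_one (by positivity)]
    refine (norm_sum_le_of_le _ fun j _ ↦ hfb _ ?_).trans (by simp)
    rwa [norm_mul, norm_pow, hζ.norm'_eq_one hn, one_pow, one_mul]
  simpa using norm_coeff_one_le_of_hasSum hG hGb

theorem tsum_norm_mul_pow_add_le {E : Type*} [SeminormedAddCommGroup E] {b : ℕ → E}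
    {C ρ y : ℝ} (N : ℕ) (hb : ∀ n, ‖b (n + N)‖ ≤ C) (hρ : 0 ≤ ρ) (hρy : ρ ≤ y) (hy : y < 1) :
    ∑' n, ‖b (n + N)‖ * ρ ^ (n + N) ≤ C * y ^ N / (1 - y) := by
  have hρ₁ : ρ < 1 := hρy.trans_lt hy
  have hC : 0 ≤ C := (norm_nonneg _).trans (hb 0)
  have hle : ∀ n, ‖b (n + N)‖ * ρ ^ (n + N) ≤ C * ρ ^ N * ρ ^ n := fun n ↦ by
    rw [pow_add, mul_comm (ρ ^ n), ← mul_assoc]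
    gcongr
    exact hb n
  have hgeom : Summable fun n ↦ C * ρ ^ N * ρ ^ n :=
    (summable_geometric_of_lt_one hρ hρ₁).mul_left _
  calc ∑' n, ‖b (n + N)‖ * ρ ^ (n + N)
      ≤ ∑' n, C * ρ ^ N * ρ ^ n :=
        Summable.tsum_le_tsum hle (hgeom.of_nonneg_of_le (fun n ↦ by positivity) hle) hgeom
    _ = C * (ρ ^ N / (1 - ρ)) := by
        rw [tsum_mul_left, tsum_geometric_of_lt_one hρ hρ₁, mul_assoc, div_eq_mul_inv]
    _ ≤ C * (y ^ N / (1 - y)) := by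
        gcongr
        exact pow_nonneg (hρ.trans hρy) N
    _ = C * y ^ N / (1 - y) := (mul_div_assoc _ _ _).symm

theorem rpow_le_one_sub_mul_one_sub_sq {t p : ℝ} (ht : 0 ≤ t) (hp₀ : 0 ≤ p) (hp₂ : p ≤ 2) :
    t ^ p ≤ 1 - p / 2 * (1 - t ^ 2) := by
  have h := rpow_one_add_le_one_add_mul_self (s := t ^ 2 - 1) (by nlinarith) (by linarith)
    (by linarith : p / 2 ≤ 1)
  have hsq : (t ^ 2) ^ (p / 2) = t ^ p := by
    rw [← Real.rpow_natCast, ← Real.rpow_mul ht, Nat.cast_ofNat, mul_div_cancel₀ _ two_ne_zero]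
  rw [add_sub_cancel, hsq] at h
  exact h.trans_eq (by ring)

theorem rpow_add_mul_div_one_sub_le_one {A x y p : ℝ} {N : ℕ} (hA₀ : 0 ≤ A) (hA₁ : A ≤ 1)
    (hx₀ : 0 ≤ x) (hx₁ : x ≤ 1) (hy : y < 1) (hp₀ : 0 ≤ p) (hp₂ : p ≤ 2)
    (hR : 2 * y ^ N * (1 + x) ≤ p * (1 - x) * (1 - y)) :
    ((A + x) / (1 + A * x)) ^ p + (1 - A ^ 2) * y ^ N / (1 - y) ≤ 1 := by
  have hAx : 0 < 1 + A * x := by positivity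
  have hA2 : 0 ≤ 1 - A ^ 2 := by nlinarith
  have ht : 1 - ((A + x) / (1 + A * x)) ^ 2 = (1 - A ^ 2) * (1 - x ^ 2) / (1 + A * x) ^ 2 := by
    field_simp
    ring
  have htail : (1 - A ^ 2) * y ^ N / (1 - y) ≤ p / 2 * (1 - ((A + x) / (1 + A * x)) ^ 2) := by
    have hyN : y ^ N / (1 - y) ≤ p * (1 - x) / (2 * (1 + x)) := by
      rw [div_le_div_iff₀ (by linarith) (by positivity)]
      linarith
    calc (1 - A ^ 2) * y ^ N / (1 - y) ≤ (1 - A ^ 2) * (p * (1 - x) / (2 * (1 + x))) := by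
          rw [mul_div_assoc]
          gcongr
      _ = p / 2 * ((1 - A ^ 2) * (1 - x ^ 2) / (1 + x) ^ 2) := by
          field_simp
          ring
      _ ≤ p / 2 * ((1 - A ^ 2) * (1 - x ^ 2) / (1 + A * x) ^ 2) := by
          have : 0 ≤ 1 - x ^ 2 := by nlinarith
          gcongr
          nlinarith
      _ = p / 2 * (1 - ((A + x) / (1 + A * x)) ^ 2) := by rw [ht]
  linarith [rpow_le_one_sub_mul_one_sub_sq (by positivity : 0 ≤ (A + x) / (1 + A * x)) hp₀ hp₂]

/-- Bohr–Rogosinski inequality involving Schwarz functions: for `p ∈ (0,2]`, `N ≥ 1`, and `R`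
the root in `(0,1)` of `2 r^{kN}(1+r^m) - p(1-r^m)(1-r^k) = 0`, one has
`|f(ω_m z)|^p + ∑_{n≥N} |aₙ| |ω_k z|ⁿ ≤ 1` whenever `|z| ≤ R`. -/
theorem stmt_3 (m k N : ℕ) (hm : 1 ≤ m) (hk : 1 ≤ k) (hN : 1 ≤ N)
    (p : ℝ) (hp : p ∈ Set.Ioc (0 : ℝ) 2)
    (f ωm ωk : ℂ → ℂ) (a : ℕ → ℂ)
    (hf : ∀ z : ℂ, ‖z‖ < 1 → HasSum (fun n : ℕ => a n * z ^ n) (f z))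
    (hfb : ∀ z : ℂ, ‖z‖ < 1 → ‖f z‖ ≤ 1)
    (hωm : ∀ z : ℂ, ‖z‖ < 1 → ‖ωm z‖ ≤ ‖z‖ ^ m)
    (hωk : ∀ z : ℂ, ‖z‖ < 1 → ‖ωk z‖ ≤ ‖z‖ ^ k)
    (R : ℝ) (hR : R ∈ Set.Ioo (0 : ℝ) 1)
    (hroot : 2 * R ^ (k * N) * (1 + R ^ m) - p * (1 - R ^ m) * (1 - R ^ k) = 0)
    (z : ℂ) (hz : ‖z‖ ≤ R) :
    ‖f (ωm z)‖ ^ p +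
      (∑' n : ℕ, ‖a (n + N)‖ * ‖ωk z‖ ^ (n + N)) ≤ 1 := by
  obtain ⟨hp₀, hp₂⟩ := hp
  obtain ⟨hR₀, hR₁⟩ := hR
  have hz₁ : ‖z‖ < 1 := hz.trans_lt hR₁
  have hRm : R ^ m < 1 := pow_lt_one₀ hR₀.le hR₁ (by omega)
  have hRk : R ^ k < 1 := pow_lt_one₀ hR₀.le hR₁ (by omega)
  have hωmz : ‖ωm z‖ ≤ R ^ m := (hωm z hz₁).trans (pow_le_pow_left₀ (norm_nonneg z) hz m)
  have hωkz : ‖ωk z‖ ≤ R ^ k := (hωk z hz₁).trans (pow_le_pow_left₀ (norm_nonneg z) hz k)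
  have hf0 : f 0 = a 0 := apply_zero_eq_of_hasSum hf
  have ha0 : ‖a 0‖ ≤ 1 := hf0 ▸ hfb 0 (by simp)
  have hfωm : ‖f (ωm z)‖ ≤ (‖a 0‖ + R ^ m) / (1 + ‖a 0‖ * R ^ m) := by
    refine (hf0 ▸ norm_apply_le_of_mapsTo_closedBall (differentiableOn_of_hasSum hf)
      (fun w hw ↦ mem_closedBall_zero_iff.mpr (hfb w (mem_ball_zero_iff.mp hw)))
      (hωmz.trans_lt hRm)).trans ?_
    exact add_div_one_add_mul_le_of_le (norm_nonneg _) ha0 (norm_nonneg _) hωmz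
  have htail := tsum_norm_mul_pow_add_le N
    (fun n ↦ norm_coeff_le_one_sub_sq_of_hasSum hf hfb (n := n + N) (by omega))
    (norm_nonneg _) hωkz hRk
  calc _ ≤ ((‖a 0‖ + R ^ m) / (1 + ‖a 0‖ * R ^ m)) ^ p
        + (1 - ‖a 0‖ ^ 2) * (R ^ k) ^ N / (1 - R ^ k) :=
        add_le_add (Real.rpow_le_rpow (norm_nonneg _) hfωm hp₀.le) htail
    _ ≤ 1 := rpow_add_mul_div_one_sub_le_one (norm_nonneg _) ha0 (by positivity) hRm.le hRk
        hp₀.le hp₂ (by rw [← pow_mul]; linarith)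
end PowerSeries
end

section
/- Fix p ∈ (0,1], positive integers m, k, N, and r ∈ (0,1) such that 2r^{kN}(1+r^m) ≤ p(1−r^m)(1−r^k). Then the function Φ(a) := 1 − ((r^m + a)/(1 + ar^m))^p − (1 − a²) r^{kN}/(1 − r^k) is nonnegative for every a ∈ [0,1]. -/
/-- For `p ∈ (0,1]` and `r ∈ (0,1)` with `2 r^{kN}(1+r^m) ≤ p(1-r^m)(1-r^k)`, the function
`Φ(a) = 1 - ((r^m+a)/(1+a r^m))^p - (1-a²) r^{kN}/(1-r^k)` is nonnegative on `[0,1]`. -/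
theorem stmt_5 (m k N : ℕ) (hm : 1 ≤ m) (hk : 1 ≤ k) (hN : 1 ≤ N)
    (p : ℝ) (hp : p ∈ Set.Ioc (0 : ℝ) 1) (r : ℝ) (hr : r ∈ Set.Ioo (0 : ℝ) 1)
    (hcond : 2 * r ^ (k * N) * (1 + r ^ m) ≤ p * (1 - r ^ m) * (1 - r ^ k)) :
    ∀ a : ℝ, a ∈ Set.Icc (0 : ℝ) 1 →
      0 ≤ 1 - ((r ^ m + a) / (1 + a * r ^ m)) ^ p - (1 - a ^ 2) * r ^ (k * N) / (1 - r ^ k) := by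
  obtain ⟨hp0, hp1⟩ := hp
  obtain ⟨hr0, hr1⟩ := hr
  rintro a ⟨ha0, ha1⟩
  have hs0 : 0 < r ^ m := pow_pos hr0 m
  have hs1 : r ^ m < 1 := pow_lt_one₀ hr0.le hr1 (by omega)
  have hk1 : r ^ k < 1 := pow_lt_one₀ hr0.le hr1 (by omega)
  have hdk : 0 < 1 - r ^ k := by linarith
  have hkN0 : 0 < r ^ (k * N) := pow_pos hr0 _
  have hden : 0 < 1 + a * r ^ m := by nlinarith
  set f := (r ^ m + a) / (1 + a * r ^ m) with hf
  have hf0 : 0 ≤ f := div_nonneg (by linarith) hden.le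
  -- Bernoulli-type inequality via weighted AM-GM
  have hBern : f ^ p ≤ 1 - p * (1 - f) := by
    have := Real.geom_mean_le_arith_mean2_weighted hp0.le (by linarith : (0:ℝ) ≤ 1 - p)
      hf0 zero_le_one (by ring)
    rw [Real.one_rpow, mul_one] at this
    linarith
  have h1f : 1 - f = (1 - r ^ m) * (1 - a) / (1 + a * r ^ m) := by
    rw [hf]; field_simp; ring
  have h2 : (1 - a ^ 2) * r ^ (k * N) / (1 - r ^ k) ≤ p * (1 - f) := by
    rw [h1f, mul_div_assoc' p, div_le_div_iff₀ hdk hden]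
    have h3 : (1 + a) * (1 + a * r ^ m) ≤ 2 * (1 + r ^ m) := by nlinarith
    have h4 : (1 - a) * (2 * r ^ (k * N) * (1 + r ^ m)) ≤
        (1 - a) * (p * (1 - r ^ m) * (1 - r ^ k)) :=
      mul_le_mul_of_nonneg_left hcond (by linarith)
    have h5 : (1 - a) * ((1 + a) * (1 + a * r ^ m)) * r ^ (k * N) ≤
        (1 - a) * (2 * (1 + r ^ m)) * r ^ (k * N) := by
      apply mul_le_mul_of_nonneg_right _ hkN0.le
      exact mul_le_mul_of_nonneg_left h3 (by linarith)
    nlinarith [h4, h5]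
  linarith
end

section
/- Fix p ∈ (1,2], a positive integer m, and a ∈ [0,1]. The function Ψ(r) := (1+r^m)² (r^m + a)^{p−1} / (1 + a r^m)^{p+1} is monotonically increasing in r on [0,1); in particular Ψ(r) ≥ Ψ(0) = a^{p−1} for all r ∈ [0,1). -/
/-- For `p ∈ (1,2]`, `m ≥ 1`, `a ∈ [0,1]`, the function
`Ψ(r) = (1+r^m)² (r^m+a)^{p-1} / (1+a r^m)^{p+1}` is monotone increasing on `[0,1)`; in
particular `Ψ(r) ≥ Ψ(0) = a^{p-1}` on `[0,1)`. -/
theorem stmt_6 (p : ℝ) (hp : p ∈ Set.Ioc (1 : ℝ) 2) (m : ℕ) (hm : 1 ≤ m)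
    (a : ℝ) (ha : a ∈ Set.Icc (0 : ℝ) 1) :
    MonotoneOn (fun r : ℝ => (1 + r ^ m) ^ 2 * (r ^ m + a) ^ (p - 1) / (1 + a * r ^ m) ^ (p + 1))
      (Set.Ico (0 : ℝ) 1) ∧
    ∀ r : ℝ, r ∈ Set.Ico (0 : ℝ) 1 →
      a ^ (p - 1) ≤ (1 + r ^ m) ^ 2 * (r ^ m + a) ^ (p - 1) / (1 + a * r ^ m) ^ (p + 1) := by
  obtain ⟨ha0, ha1⟩ := ha
  obtain ⟨hp1, hp2⟩ := hp
  -- key: rewrite Ψ as a product of two monotone nonneg factors, in terms of t = r^m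
  have key : ∀ t : ℝ, 0 ≤ t →
      (1 + t) ^ 2 * (t + a) ^ (p - 1) / (1 + a * t) ^ (p + 1)
        = ((1 + t) / (1 + a * t)) ^ 2 * ((t + a) / (1 + a * t)) ^ (p - 1) := by
    intro t ht
    have hat : 0 ≤ a * t := mul_nonneg ha0 ht
    have h1 : (0 : ℝ) < 1 + a * t := by linarith
    have hta : (0 : ℝ) ≤ t + a := by linarith
    rw [div_pow, Real.div_rpow hta h1.le,
      show p + 1 = 2 + (p - 1) by ring, Real.rpow_add h1,
      show (2 : ℝ) = ((2 : ℕ) : ℝ) by norm_num, Real.rpow_natCast]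
    have h2 : (0 : ℝ) < (1 + a * t) ^ (2 : ℕ) := by positivity
    have h3 : (0 : ℝ) < (1 + a * t) ^ (p - 1) := Real.rpow_pos_of_pos h1 _
    field_simp
  -- monotonicity of the two Möbius-type factors in t on [0,∞)
  have mob1 : ∀ s t : ℝ, 0 ≤ s → s ≤ t →
      (1 + s) / (1 + a * s) ≤ (1 + t) / (1 + a * t) := by
    intro s t hs hst
    have ht : 0 ≤ t := le_trans hs hst
    have h1 : (0 : ℝ) < 1 + a * s := by nlinarith
    have h2 : (0 : ℝ) < 1 + a * t := by nlinarith
    rw [div_le_div_iff₀ h1 h2]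
    nlinarith [mul_nonneg (sub_nonneg.2 hst) (sub_nonneg.2 ha1)]
  have mob2 : ∀ s t : ℝ, 0 ≤ s → s ≤ t →
      (s + a) / (1 + a * s) ≤ (t + a) / (1 + a * t) := by
    intro s t hs hst
    have ht : 0 ≤ t := le_trans hs hst
    have h1 : (0 : ℝ) < 1 + a * s := by nlinarith
    have h2 : (0 : ℝ) < 1 + a * t := by nlinarith
    rw [div_le_div_iff₀ h1 h2]
    have ha2 : a ^ 2 ≤ 1 := by nlinarith
    nlinarith [mul_nonneg (sub_nonneg.2 hst) (sub_nonneg.2 ha2)]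
  have hmono : MonotoneOn
      (fun r : ℝ => (1 + r ^ m) ^ 2 * (r ^ m + a) ^ (p - 1) / (1 + a * r ^ m) ^ (p + 1))
      (Set.Ico (0 : ℝ) 1) := by
    intro x hx y hy hxy
    have hxm : 0 ≤ x ^ m := pow_nonneg hx.1 m
    have hym : 0 ≤ y ^ m := pow_nonneg hy.1 m
    have hpow : x ^ m ≤ y ^ m := pow_le_pow_left₀ hx.1 hxy m
    simp only
    rw [key _ hxm, key _ hym]
    have h1 := mob1 _ _ hxm hpow
    have h2 := mob2 _ _ hxm hpow
    have hd1 : (0 : ℝ) ≤ (1 + x ^ m) / (1 + a * x ^ m) := by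
      apply div_nonneg <;> nlinarith [mul_nonneg ha0 hxm]
    have hd2 : (0 : ℝ) ≤ (1 + y ^ m) / (1 + a * y ^ m) := by
      apply div_nonneg <;> nlinarith [mul_nonneg ha0 hym]
    have hf1 : ((1 + x ^ m) / (1 + a * x ^ m)) ^ 2 ≤ ((1 + y ^ m) / (1 + a * y ^ m)) ^ 2 :=
      pow_le_pow_left₀ hd1 h1 2
    have he2 : (0 : ℝ) ≤ (x ^ m + a) / (1 + a * x ^ m) := by
      apply div_nonneg <;> nlinarith [mul_nonneg ha0 hxm]
    have hf2 : ((x ^ m + a) / (1 + a * x ^ m)) ^ (p - 1)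
        ≤ ((y ^ m + a) / (1 + a * y ^ m)) ^ (p - 1) :=
      Real.rpow_le_rpow he2 h2 (by linarith)
    exact mul_le_mul hf1 hf2 (Real.rpow_nonneg he2 _) (pow_nonneg hd2 2)
  refine ⟨hmono, fun r hr => ?_⟩
  have h0 : (0 : ℝ) ∈ Set.Ico (0 : ℝ) 1 := by constructor <;> norm_num
  have := hmono h0 hr hr.1
  have h0m : (0 : ℝ) ^ m = 0 := zero_pow (by omega)
  simp only [h0m] at this
  calc a ^ (p - 1)
      = (1 + (0:ℝ)) ^ 2 * ((0:ℝ) + a) ^ (p - 1) / (1 + a * 0) ^ (p + 1) := by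
        rw [mul_zero, add_zero, Real.one_rpow, zero_add]
        norm_num
    _ ≤ _ := this
end

section
/- For every k ≥ 1 and every r ∈ [0, (3/5)^{1/k}], one has max over a ∈ [0,1] of F(a) := −1 + a r^k + (1−a²) r^{2k}/(1−r^k) is at most 0; equivalently, a r^k + (1−a²) r^{2k}/(1−r^k) ≤ 1 for all a ∈ [0,1] and r^k ≤ 3/5. -/
/-- For `k ≥ 1`, `r ∈ [0, (3/5)^{1/k}]` and `a ∈ [0,1]`,
`a r^k + (1-a²) r^{2k}/(1-r^k) ≤ 1`. -/
theorem stmt_10 (k : ℕ) (hk : 1 ≤ k) (r : ℝ)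
    (hr : r ∈ Set.Icc (0 : ℝ) (((3 : ℝ) / 5) ^ ((1 : ℝ) / (k : ℝ))))
    (a : ℝ) (ha : a ∈ Set.Icc (0 : ℝ) 1) :
    a * r ^ k + (1 - a ^ 2) * r ^ (2 * k) / (1 - r ^ k) ≤ 1 := by
  obtain ⟨hr0, hr1⟩ := hr
  obtain ⟨ha0, ha1⟩ := ha
  have hkne : (k : ℝ) ≠ 0 := Nat.cast_ne_zero.mpr (by omega)
  have hx : r ^ k ≤ 3 / 5 := by
    calc r ^ k ≤ (((3 : ℝ) / 5) ^ ((1 : ℝ) / (k : ℝ))) ^ k :=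
          pow_le_pow_left₀ hr0 hr1 k
      _ = 3 / 5 := by
          rw [← Real.rpow_natCast (((3 : ℝ) / 5) ^ ((1 : ℝ) / (k : ℝ))) k,
            ← Real.rpow_mul (by norm_num), one_div, inv_mul_cancel₀ hkne,
            Real.rpow_one]
  have hx0 : 0 ≤ r ^ k := pow_nonneg hr0 k
  have hpos : 0 < 1 - r ^ k := by linarith
  rw [mul_comm 2 k, pow_mul, ← sub_nonneg]
  have key : 1 - (a * r ^ k + (1 - a ^ 2) * (r ^ k) ^ 2 / (1 - r ^ k)) =
      ((1 - a * r ^ k) * (1 - r ^ k) - (1 - a ^ 2) * (r ^ k) ^ 2) / (1 - r ^ k) := by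
    field_simp; ring
  rw [key]
  apply div_nonneg _ hpos.le
  rcases eq_or_lt_of_le hx0 with h0 | h0
  · nlinarith [sq_nonneg a]
  nlinarith [sq_nonneg (2 * (r ^ k) ^ 2 * a + (r ^ k) ^ 2 - r ^ k),
    mul_nonneg (mul_nonneg (by linarith : (0:ℝ) ≤ 3 - 5 * r ^ k)
      (by linarith : (0:ℝ) ≤ 1 + r ^ k)) (sq_nonneg (r ^ k)), mul_pos h0 h0]
end

section
/- For r ∈ (0,1) with r^k > 3/5 (k a positive integer), there exists a ∈ (0,1) such that a r^k + (1−a²) r^{2k}/(1−r^k) > 1. Consequently the radius (3/5)^{1/k} in the refined Bohr inequality for functions vanishing at the origin is sharp, witnessed by f*_a(z) = z(a−z)/(1−az) and ω(z) = z^k. -/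
/-! The sum `a t + (1 - a²) t² / (1 - t)`, with `t = r^k`, is a concave quadratic in `a`,
maximized at `a = (1 - t) / (2t)`, which lies in `(0, 1)` once `t > 1/3`. Its maximum
`(1 - t)/4 + t²/(1 - t)` exceeds `1` exactly when `(5t - 3)(t + 1) > 0`, i.e. when `t > 3/5`. -/

lemma bohr_sum_at_maximizer {t : ℝ} (ht0 : 0 < t) (ht1 : t < 1) :
    let a := (1 - t) / (2 * t)
    a * t + (1 - a ^ 2) * t ^ 2 / (1 - t) = (1 - t) / 4 + t ^ 2 / (1 - t) := by
  have : 1 - t ≠ 0 := by linarith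
  field_simp
  ring

lemma one_lt_bohr_sum_max {t : ℝ} (ht : 3 / 5 < t) (ht1 : t < 1) :
    1 < (1 - t) / 4 + t ^ 2 / (1 - t) := by
  have h1t : 0 < 1 - t := by linarith
  rw [div_add_div _ _ (by norm_num) h1t.ne', lt_div_iff₀ (by positivity)]
  nlinarith

theorem exists_one_lt_bohr_sum {t : ℝ} (ht : 3 / 5 < t) (ht1 : t < 1) :
    ∃ a ∈ Set.Ioo (0 : ℝ) 1, 1 < a * t + (1 - a ^ 2) * t ^ 2 / (1 - t) := by
  have ht0 : 0 < t := by linarith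
  refine ⟨(1 - t) / (2 * t), ⟨div_pos (by linarith) (by positivity), ?_⟩, ?_⟩
  · rw [div_lt_one (by positivity)]
    linarith
  · rw [bohr_sum_at_maximizer ht0 ht1]
    exact one_lt_bohr_sum_max ht ht1

/-- Sharpness of the radius `(3/5)^{1/k}`: if `r ∈ (0,1)` with `r^k > 3/5`, then there is
`a ∈ (0,1)` such that `a r^k + (1-a²) r^{2k}/(1-r^k) > 1`. -/
theorem stmt_11 (k : ℕ) (hk : 1 ≤ k) (r : ℝ) (hr : r ∈ Set.Ioo (0 : ℝ) 1)
    (hrk : (3 : ℝ) / 5 < r ^ k) :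
    ∃ a : ℝ, a ∈ Set.Ioo (0 : ℝ) 1 ∧
      1 < a * r ^ k + (1 - a ^ 2) * r ^ (2 * k) / (1 - r ^ k) := by
  have hrk1 : r ^ k < 1 := pow_lt_one₀ hr.1.le hr.2 (by omega)
  rw [mul_comm 2 k, pow_mul]
  exact exists_one_lt_bohr_sum hrk hrk1
end

section
/- Let a ∈ (0,1), k, m, N positive integers, p ∈ (0,2]. For f_a(z)=(a−z)/(1−az), ω_m(z) := −r^m (constant), ω_k(z)=z^k, and |z|=r ∈ (0,1), one has |f_a(ω_m(z))|^p + ∑_{n=N}^∞ |a_n| |ω_k(z)|^n = ((a+r^m)/(1+a r^m))^p + (1−a²) a^{N−1} r^{kN}/(1 − a r^k), and as a → 1⁻ the condition that this exceed 1 becomes 2r^{kN}(1+r^m) − p(1−r^m)(1−r^k) > 0. -/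
open Filter Topology

/-!
The tail of the coefficient series of `f_a` at `ρ = r^k` is a geometric series with ratio `a r^k`.
For the limit, after cancelling `1 - a r^k`, the only indeterminate part of `Q(a, r)` is
`(1 - g(a)) / (1 - a)` with `g(a) = ((r^m + a) / (1 + a r^m))^p` and `g(1) = 1`: it is a difference
quotient of `g` at `1`, so it tends to `g'(1) = p (1 - r^m) / (1 + r^m)`.
-/

lemma tsum_pow_add_sub_one_mul_pow_add {a ρ : ℝ} {N : ℕ} (hN : 1 ≤ N) (h : ‖a * ρ‖ < 1) :
    ∑' n : ℕ, a ^ (n + N - 1) * ρ ^ (n + N) = a ^ (N - 1) * ρ ^ N / (1 - a * ρ) := by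
  have hterm (n : ℕ) : a ^ (n + N - 1) * ρ ^ (n + N) = a ^ (N - 1) * ρ ^ N * (a * ρ) ^ n := by
    rw [show n + N - 1 = N - 1 + n by omega, pow_add, pow_add, mul_pow]
    ring
  rw [tsum_congr hterm, tsum_mul_left, tsum_geometric_of_norm_lt_one h, div_eq_mul_inv]

lemma tendsto_one_sub_div_one_sub_of_hasDerivAt {f : ℝ → ℝ} {f' : ℝ} (hf : HasDerivAt f f' 1)
    (hf1 : f 1 = 1) : Tendsto (fun a => 1 / (1 - a) * (1 - f a)) (𝓝[≠] 1) (𝓝 f') := by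
  refine hf.tendsto_slope.congr' ?_
  filter_upwards [self_mem_nhdsWithin] with a (ha : a ≠ 1)
  have ha' : 1 - a ≠ 0 := sub_ne_zero.mpr ha.symm
  rw [slope_def_field, hf1]
  field_simp
  ring

lemma hasDerivAt_div_one_add_mul_rpow {x : ℝ} (hx : 1 + x ≠ 0) (p : ℝ) :
    HasDerivAt (fun a => ((x + a) / (1 + a * x)) ^ p) ((1 - x) / (1 + x) * p) 1 := by
  have hfrac : HasDerivAt (fun a => (x + a) / (1 + a * x)) ((1 - x) / (1 + x)) 1 := by
    have hnum : HasDerivAt (fun a : ℝ => x + a) 1 1 := (hasDerivAt_id 1).const_add x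
    have hden : HasDerivAt (fun a : ℝ => 1 + a * x) x 1 := by
      simpa using ((hasDerivAt_id 1).mul_const x).const_add 1
    refine (hnum.fun_div hden (by simpa using hx)).congr_deriv ?_
    field_simp
    ring
  have hval : (x + 1) / (1 + 1 * x) = 1 := by rw [one_mul, add_comm, div_self hx]
  have h := hfrac.rpow_const (p := p) (.inl (by rw [hval]; exact one_ne_zero))
  rwa [hval, Real.one_rpow, mul_one] at h

lemma tendsto_sharpness_quantity {x y c : ℝ} (p : ℝ) (N : ℕ) (hx : 1 + x ≠ 0)
    (hy : y ∈ Set.Icc (0 : ℝ) 1) :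
    Tendsto
      (fun a : ℝ => (1 - a * y) * (1 + a * x) ^ p *
        ((1 + a) / (1 - a * y) * a ^ (N - 1) * c - 1 / (1 - a) * (1 - ((x + a) / (1 + a * x)) ^ p)))
      (𝓝[<] 1) (𝓝 ((1 + x) ^ (p - 1) * (2 * c * (1 + x) - p * (1 - x) * (1 - y)))) := by
  have hquot : Tendsto (fun a => 1 / (1 - a) * (1 - ((x + a) / (1 + a * x)) ^ p)) (𝓝[<] 1)
      (𝓝 ((1 - x) / (1 + x) * p)) :=
    (tendsto_one_sub_div_one_sub_of_hasDerivAt (hasDerivAt_div_one_add_mul_rpow hx p)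
      (by simp [add_comm x, div_self hx])).mono_left
      (nhdsWithin_mono 1 fun a (ha : a < 1) => ha.ne)
  have hpow : Tendsto (fun a : ℝ => (1 + a * x) ^ p) (𝓝[<] 1) (𝓝 ((1 + x) ^ p)) := by
    have hcont : ContinuousAt (fun a : ℝ => (1 + a * x) ^ p) 1 :=
      (show ContinuousAt (fun a : ℝ => 1 + a * x) 1 by fun_prop).rpow_const
        (.inl (by simpa using hx))
    simpa using hcont.tendsto.mono_left nhdsWithin_le_nhds
  have hpoly : Tendsto (fun a : ℝ => (1 + a) * a ^ (N - 1) * c) (𝓝[<] 1) (𝓝 (2 * c)) := by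
    have hcont : Continuous fun a : ℝ => (1 + a) * a ^ (N - 1) * c := by fun_prop
    simpa [one_add_one_eq_two] using (hcont.tendsto 1).mono_left nhdsWithin_le_nhds
  have hlin : Tendsto (fun a : ℝ => 1 - a * y) (𝓝[<] 1) (𝓝 (1 - y)) := by
    have hcont : Continuous fun a : ℝ => 1 - a * y := by fun_prop
    simpa using (hcont.tendsto 1).mono_left nhdsWithin_le_nhds
  convert (hpow.mul (hpoly.sub (hlin.mul hquot))).congr' ?_ using 2
  · rw [Real.rpow_sub_one hx]
    field_simp
  · filter_upwards [self_mem_nhdsWithin] with a (ha : a < 1)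
    have hay : 1 - a * y ≠ 0 := by nlinarith [mul_nonneg (sub_nonneg.2 ha.le) hy.1, hy.2]
    field_simp

theorem stmt_13_general (k m N : ℕ) (hN : 1 ≤ N)
    (p : ℝ) (r : ℝ) (hr : r ∈ Set.Ioo (0 : ℝ) 1) :
    (∀ a : ℝ, a ∈ Set.Ioo (0 : ℝ) 1 →
      ((a + r ^ m) / (1 + a * r ^ m)) ^ p +
          (∑' n : ℕ, (1 - a ^ 2) * a ^ (n + N - 1) * r ^ (k * (n + N))) =
        ((a + r ^ m) / (1 + a * r ^ m)) ^ p +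
          (1 - a ^ 2) * a ^ (N - 1) * r ^ (k * N) / (1 - a * r ^ k)) ∧
    Tendsto
      (fun a : ℝ =>
        (1 - a * r ^ k) * (1 + a * r ^ m) ^ p *
          (((1 + a) / (1 - a * r ^ k)) * a ^ (N - 1) * r ^ (k * N) -
            (1 / (1 - a)) * (1 - ((r ^ m + a) / (1 + a * r ^ m)) ^ p)))
      (nhdsWithin 1 (Set.Iio 1))
      (nhds ((1 + r ^ m) ^ (p - 1) *
        (2 * r ^ (k * N) * (1 + r ^ m) - p * (1 - r ^ m) * (1 - r ^ k)))) := by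
  obtain ⟨hr0, hr1⟩ := hr
  refine ⟨fun a ⟨ha0, ha1⟩ => ?_, tendsto_sharpness_quantity p N (by positivity)
    ⟨by positivity, pow_le_one₀ hr0.le hr1.le⟩⟩
  have hρ : ‖a * r ^ k‖ < 1 := by
    rw [Real.norm_of_nonneg (by positivity)]
    nlinarith [pow_le_one₀ hr0.le hr1.le (n := k), pow_pos hr0 k]
  simp_rw [pow_mul r k, mul_assoc (1 - a ^ 2), tsum_mul_left,
    tsum_pow_add_sub_one_mul_pow_add hN hρ, mul_div_assoc]

/-- Sharpness computation for the Bohr–Rogosinski radius: for the test function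
`f_a(z) = (a-z)/(1-az)` (with `|a₀| = a`, `|aₙ| = (1-a²)a^{n-1}`), `ω_m(z) = -r^m`,
`ω_k(z) = z^k` and `|z| = r`, the Bohr–Rogosinski sum equals
`((a+r^m)/(1+a r^m))^p + (1-a²) a^{N-1} r^{kN}/(1-a r^k)`, and the quantity `Q(a,r)`
controlling its exceeding `1` tends, as `a → 1⁻`, to
`(1+r^m)^{p-1} (2 r^{kN}(1+r^m) - p(1-r^m)(1-r^k))`. -/
theorem stmt_13 (k m N : ℕ) (hk : 1 ≤ k) (hm : 1 ≤ m) (hN : 1 ≤ N)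
    (p : ℝ) (hp : p ∈ Set.Ioc (0 : ℝ) 2) (r : ℝ) (hr : r ∈ Set.Ioo (0 : ℝ) 1) :
    (∀ a : ℝ, a ∈ Set.Ioo (0 : ℝ) 1 →
      ((a + r ^ m) / (1 + a * r ^ m)) ^ p +
          (∑' n : ℕ, (1 - a ^ 2) * a ^ (n + N - 1) * r ^ (k * (n + N))) =
        ((a + r ^ m) / (1 + a * r ^ m)) ^ p +
          (1 - a ^ 2) * a ^ (N - 1) * r ^ (k * N) / (1 - a * r ^ k)) ∧
    Tendsto
      (fun a : ℝ =>
        (1 - a * r ^ k) * (1 + a * r ^ m) ^ p *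
          (((1 + a) / (1 - a * r ^ k)) * a ^ (N - 1) * r ^ (k * N) -
            (1 / (1 - a)) * (1 - ((r ^ m + a) / (1 + a * r ^ m)) ^ p)))
      (nhdsWithin 1 (Set.Iio 1))
      (nhds ((1 + r ^ m) ^ (p - 1) *
        (2 * r ^ (k * N) * (1 + r ^ m) - p * (1 - r ^ m) * (1 - r ^ k)))) :=
  stmt_13_general k m N hN p r hr
end

section
/- Fix p ∈ (1,2], positive integers m, k, N, and r ∈ (0,1) with 2r^{kN}(1+r^m) ≤ p(1−r^m)(1−r^k). Then for every a ∈ [0,1], Φ'(a) := 2a r^{kN}/(1−r^k) − p(1−r^{2m})(r^m+a)^{p−1}/(1+a r^m)^{p+1} ≤ 0; i.e., the function Φ(a) = 1 − ((r^m+a)/(1+a r^m))^p − (1−a²)r^{kN}/(1−r^k) is nonincreasing on [0,1]. -/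
open Set

/- With `s = r^m`, the derivative of `a ↦ ((s + a)/(1 + a s))^p` is
`p (1 - s²)(s + a)^(p-1)/(1 + a s)^(p+1)`, and the hypothesis on `r` says `2 r^{kN}/(1 - r^k)` is at
most `p (1 - s)/(1 + s)`. So `Φ' ≤ 0` reduces to `a (1 + a s)^(p+1) ≤ (1 + s)²(s + a)^(p-1)`, which
holds because `a ≤ a^(p-1)` for `p ≤ 2`, `a (1 + a s) ≤ s + a` and `1 + a s ≤ 1 + s`. -/

namespace Real

lemma self_mul_rpow_add_one_le {a s p : ℝ} (ha₀ : 0 ≤ a) (ha₁ : a ≤ 1) (hs : 0 ≤ s)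
    (hp₁ : 1 ≤ p) (hp₂ : p ≤ 2) :
    a * (1 + a * s) ^ (p + 1) ≤ (1 + s) ^ 2 * (s + a) ^ (p - 1) := by
  have hpos : 0 < 1 + a * s := by positivity
  have hself : a ≤ a ^ (p - 1) := self_le_rpow_of_le_one ha₀ ha₁ (by linarith)
  have hsq : (1 + a * s) ^ 2 ≤ (1 + s) ^ 2 := by gcongr; nlinarith
  have hbase : (a * (1 + a * s)) ^ (p - 1) ≤ (s + a) ^ (p - 1) :=
    rpow_le_rpow (by positivity) (by nlinarith) (by linarith)
  calc a * (1 + a * s) ^ (p + 1) = a * (1 + a * s) ^ (p - 1) * (1 + a * s) ^ 2 := by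
        rw [show p + 1 = p - 1 + (2 : ℕ) by ring, rpow_add_natCast hpos.ne']; ring
    _ ≤ a ^ (p - 1) * (1 + a * s) ^ (p - 1) * (1 + s) ^ 2 := by gcongr
    _ = (1 + s) ^ 2 * (a * (1 + a * s)) ^ (p - 1) := by rw [mul_rpow ha₀ hpos.le]; ring
    _ ≤ (1 + s) ^ 2 * (s + a) ^ (p - 1) := by gcongr

lemma hasDerivAt_mobius_rpow {s p x : ℝ} (hnum : 0 < s + x) (hden : 0 < 1 + x * s) :
    HasDerivAt (fun a => ((s + a) / (1 + a * s)) ^ p)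
      (p * (1 - s ^ 2) * (s + x) ^ (p - 1) / (1 + x * s) ^ (p + 1)) x := by
  have hmobius : HasDerivAt (fun a => (s + a) / (1 + a * s)) ((1 - s ^ 2) / (1 + x * s) ^ 2) x := by
    refine (((hasDerivAt_id x).const_add s).div
      (((hasDerivAt_id x).mul_const s).const_add 1) hden.ne').congr_deriv ?_
    simp only [id]; ring
  convert hmobius.rpow_const (p := p) (Or.inl (div_pos hnum hden).ne') using 1
  rw [div_rpow hnum.le hden.le, show p + 1 = p - 1 + (2 : ℕ) by ring,
    rpow_add_natCast hden.ne']
  have : 0 < (1 + x * s) ^ (p - 1) := rpow_pos_of_pos hden _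
  field_simp

end Real

open Real

lemma mul_div_le_mobius_rpow_deriv {s c d p a : ℝ} (hs₀ : 0 ≤ s) (hs₁ : s < 1) (hd : 0 < d)
    (hp₁ : 1 ≤ p) (hp₂ : p ≤ 2) (ha₀ : 0 ≤ a) (ha₁ : a ≤ 1)
    (hcond : 2 * c * (1 + s) ≤ p * (1 - s) * d) :
    2 * a * c / d ≤ p * (1 - s ^ 2) * (s + a) ^ (p - 1) / (1 + a * s) ^ (p + 1) := by
  have hden : 0 < (1 + a * s) ^ (p + 1) := rpow_pos_of_pos (by positivity) _
  have hfactor : 2 * c / d ≤ p * (1 - s) / (1 + s) := by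
    rw [div_le_div_iff₀ hd (by linarith)]; linarith
  have hkey := self_mul_rpow_add_one_le ha₀ ha₁ hs₀ hp₁ hp₂
  calc 2 * a * c / d = a * (2 * c / d) := by ring
    _ ≤ a * (p * (1 - s) / (1 + s)) := by gcongr
    _ = p * (1 - s) / (1 + s) * (a * (1 + a * s) ^ (p + 1)) / (1 + a * s) ^ (p + 1) := by
        field_simp
    _ ≤ p * (1 - s) / (1 + s) * ((1 + s) ^ 2 * (s + a) ^ (p - 1)) / (1 + a * s) ^ (p + 1) := by
        gcongr
    _ = p * (1 - s ^ 2) * (s + a) ^ (p - 1) / (1 + a * s) ^ (p + 1) := by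
        field_simp; ring

lemma antitoneOn_one_sub_mobius_rpow_sub {s c d p : ℝ} (hs : 0 < s)
    (hderiv : ∀ a ∈ Icc (0 : ℝ) 1,
      2 * a * c / d - p * (1 - s ^ 2) * (s + a) ^ (p - 1) / (1 + a * s) ^ (p + 1) ≤ 0) :
    AntitoneOn (fun a => 1 - ((s + a) / (1 + a * s)) ^ p - (1 - a ^ 2) * c / d) (Icc 0 1) := by
  have hasDeriv : ∀ x ∈ Icc (0 : ℝ) 1,
      HasDerivAt (fun a => 1 - ((s + a) / (1 + a * s)) ^ p - (1 - a ^ 2) * c / d)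
        (2 * x * c / d - p * (1 - s ^ 2) * (s + x) ^ (p - 1) / (1 + x * s) ^ (p + 1)) x := by
    intro x ⟨hx₀, _⟩
    have hquad : HasDerivAt (fun a => (1 - a ^ 2) * c / d) (-(2 * x) * c / d) x := by
      simpa using (((hasDerivAt_pow 2 x).const_sub 1).mul_const c).div_const d
    refine (((hasDerivAt_mobius_rpow (p := p) (by positivity) (by positivity)).const_sub 1).sub
      hquad).congr_deriv ?_
    ring
  refine antitoneOn_of_hasDerivWithinAt_nonpos (convex_Icc 0 1)
    (fun x hx => (hasDeriv x hx).continuousAt.continuousWithinAt) (fun x hx => ?_)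
    (fun x hx => hderiv x (interior_subset hx))
  exact (hasDeriv x (interior_subset hx)).hasDerivWithinAt

theorem stmt_16_general (m k N : ℕ) (hm : 1 ≤ m) (hk : 1 ≤ k)
    (p : ℝ) (hp : p ∈ Set.Ioc (1 : ℝ) 2) (r : ℝ) (hr : r ∈ Set.Ioo (0 : ℝ) 1)
    (hcond : 2 * r ^ (k * N) * (1 + r ^ m) ≤ p * (1 - r ^ m) * (1 - r ^ k)) :
    (∀ a : ℝ, a ∈ Set.Icc (0 : ℝ) 1 →
      2 * a * r ^ (k * N) / (1 - r ^ k) -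
        p * (1 - r ^ (2 * m)) * (r ^ m + a) ^ (p - 1) / (1 + a * r ^ m) ^ (p + 1) ≤ 0) ∧
    AntitoneOn
      (fun a : ℝ =>
        1 - ((r ^ m + a) / (1 + a * r ^ m)) ^ p - (1 - a ^ 2) * r ^ (k * N) / (1 - r ^ k))
      (Set.Icc (0 : ℝ) 1) := by
  obtain ⟨hr₀, hr₁⟩ := hr
  have hs₁ : r ^ m < 1 := pow_lt_one₀ hr₀.le hr₁ (by omega)
  have hd : 0 < 1 - r ^ k := sub_pos.2 (pow_lt_one₀ hr₀.le hr₁ (by omega))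
  have hderiv : ∀ a ∈ Icc (0 : ℝ) 1, 2 * a * r ^ (k * N) / (1 - r ^ k) -
      p * (1 - (r ^ m) ^ 2) * (r ^ m + a) ^ (p - 1) / (1 + a * r ^ m) ^ (p + 1) ≤ 0 :=
    fun a ha => sub_nonpos.2 <| mul_div_le_mobius_rpow_deriv (by positivity) hs₁ hd hp.1.le hp.2
      ha.1 ha.2 hcond
  rw [show r ^ (2 * m) = (r ^ m) ^ 2 by rw [← pow_mul, mul_comm]]
  exact ⟨hderiv, antitoneOn_one_sub_mobius_rpow_sub (by positivity) hderiv⟩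

/-- For `p ∈ (1,2]` and `r ∈ (0,1)` with `2 r^{kN}(1+r^m) ≤ p(1-r^m)(1-r^k)`, the derivative
`Φ'(a) = 2a r^{kN}/(1-r^k) - p(1-r^{2m})(r^m+a)^{p-1}/(1+a r^m)^{p+1}` is `≤ 0` on `[0,1]`;
i.e. `Φ(a) = 1 - ((r^m+a)/(1+a r^m))^p - (1-a²)r^{kN}/(1-r^k)` is nonincreasing on `[0,1]`. -/
theorem stmt_16 (m k N : ℕ) (hm : 1 ≤ m) (hk : 1 ≤ k) (hN : 1 ≤ N)
    (p : ℝ) (hp : p ∈ Set.Ioc (1 : ℝ) 2) (r : ℝ) (hr : r ∈ Set.Ioo (0 : ℝ) 1)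
    (hcond : 2 * r ^ (k * N) * (1 + r ^ m) ≤ p * (1 - r ^ m) * (1 - r ^ k)) :
    (∀ a : ℝ, a ∈ Set.Icc (0 : ℝ) 1 →
      2 * a * r ^ (k * N) / (1 - r ^ k) -
        p * (1 - r ^ (2 * m)) * (r ^ m + a) ^ (p - 1) / (1 + a * r ^ m) ^ (p + 1) ≤ 0) ∧
    AntitoneOn
      (fun a : ℝ =>
        1 - ((r ^ m + a) / (1 + a * r ^ m)) ^ p - (1 - a ^ 2) * r ^ (k * N) / (1 - r ^ k))
      (Set.Icc (0 : ℝ) 1) :=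
  stmt_16_general m k N hm hk p hp r hr hcond
end
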